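/- Consider a BD-RIS-assisted MIMO link: let H_d be an N_R×N_T complex matrix (direct channel), f_a ∈ ℂ^{N_R}, f_d ∈ ℂᴹ, g_a ∈ ℂᴹ, g_d ∈ ℂ^{N_T} (pure LoS factors of the backward channel F = f_a·f_dᴴ and forward channel Gᴴ = g_a·g_dᴴ), let R be an N_T×N_T Hermitian positive semidefinite matrix (transmit covariance) with positive semidefinite square root R^{1/2}, and σ > 0. Define A = (1/σ)·H_d·R^{1/2}, f = f_a, g = (1/σ)·R^{1/2}·g_d, γ₁ = fᴴ(I + AAᴴ)⁻¹f, γ₂ = gᴴAᴴ(I + AAᴴ)⁻¹Ag, γ₃ = gᴴAᴴ(I + AAᴴ)⁻¹f, Z = |γ₃|² + γ₁(‖g‖² − γ₂), and α* = ‖f_d‖·‖g_a‖. Then for every M×M complex matrix Θ with Θᵀ = Θ and ΘᴴΘ = I_M, the (real, positive) determinant det(I_{N_R} + (1/σ²)·H·R·Hᴴ) with H = H_d + f_a·(f_dᴴ·Θ·g_a)·g_dᴴ satisfies det(I + (1/σ²)·H·R·Hᴴ) ≤ det(I + A·Aᴴ)·(1 + Z·α*² + 2·α*·|γ₃|). 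-/

import Mathlib

open Matrix
open scoped ComplexOrder

/-!
With `α = f_dᴴ Θ g_a` the scaled channel `B = σ⁻¹ H R^{1/2}` equals `A + α f gᴴ`, so `B Bᴴ` is a
Hermitian rank-two update of `A Aᴴ`, and the generalized matrix determinant lemma gives
`det(I + B Bᴴ) = det(I + A Aᴴ) (|1 + α γ₃|² + |α|² γ₁ (‖g‖² - γ₂))`.
Here `γ₁ ≥ 0`, and the push-through identity `Aᴴ (I + A Aᴴ)⁻¹ A = I - (I + Aᴴ A)⁻¹` shows
`‖g‖² - γ₂ = gᴴ (I + Aᴴ A)⁻¹ g ≥ 0`. As `Θ` is unitary, Cauchy–Schwarz gives `|α| ≤ α*`, and the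
bound follows from `|1 + α γ₃| ≤ 1 + α* |γ₃|`.
-/

/-- Euclidean norm of a complex vector. -/
noncomputable def euclNorm {m : ℕ} (v : Fin m → ℂ) : ℝ :=
  Real.sqrt (∑ i, Complex.normSq (v i))

section EuclNorm

variable {m : ℕ}

lemma euclNorm_eq_norm_toLp (v : Fin m → ℂ) : euclNorm v = ‖WithLp.toLp 2 v‖ := by
  simp [EuclideanSpace.norm_eq, euclNorm, Complex.sq_norm]

lemma ofReal_euclNorm_sq (v : Fin m → ℂ) : ((euclNorm v ^ 2 : ℝ) : ℂ) = star v ⬝ᵥ v := by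
  rw [euclNorm, Real.sq_sqrt (Finset.sum_nonneg fun i _ => Complex.normSq_nonneg _)]
  simp [dotProduct, Complex.normSq_eq_conj_mul_self]

lemma norm_star_dotProduct_le (x y : Fin m → ℂ) :
    ‖star x ⬝ᵥ y‖ ≤ euclNorm x * euclNorm y := by
  simpa [euclNorm_eq_norm_toLp, EuclideanSpace.inner_toLp_toLp, dotProduct_comm] using
    norm_inner_le_norm (𝕜 := ℂ) (WithLp.toLp 2 x) (WithLp.toLp 2 y)

lemma euclNorm_mulVec_of_conjTranspose_mul_self {U : Matrix (Fin m) (Fin m) ℂ}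
    (hU : Uᴴ * U = 1) (x : Fin m → ℂ) : euclNorm (U *ᵥ x) = euclNorm x := by
  have h : star (U *ᵥ x) ⬝ᵥ (U *ᵥ x) = star x ⬝ᵥ x := by
    rw [star_mulVec, dotProduct_mulVec, vecMul_vecMul, hU, vecMul_one]
  rw [← ofReal_euclNorm_sq, ← ofReal_euclNorm_sq, Complex.ofReal_inj] at h
  exact (pow_left_inj₀ (Real.sqrt_nonneg _) (Real.sqrt_nonneg _) two_ne_zero).mp h

end EuclNorm

section Resolvent

variable {m n : Type*}

lemma star_dotProduct_conjTranspose_mul_mulVec {l : Type*} [Fintype m] [Fintype n] [Fintype l]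
    (A : Matrix m n ℂ) (M : Matrix m l ℂ) (v : n → ℂ) (x : l → ℂ) :
    star v ⬝ᵥ ((Aᴴ * M) *ᵥ x) = star (A *ᵥ v) ⬝ᵥ (M *ᵥ x) := by
  rw [← mulVec_mulVec, dotProduct_mulVec, star_mulVec]

lemma posDef_one_add_mul_conjTranspose [Fintype m] [Fintype n] [DecidableEq m]
    (A : Matrix m n ℂ) : (1 + A * Aᴴ).PosDef :=
  PosDef.one.add_posSemidef (posSemidef_self_mul_conjTranspose A)

lemma isUnit_det_one_add_mul_conjTranspose [Fintype m] [Fintype n] [DecidableEq m]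
    (A : Matrix m n ℂ) : IsUnit (1 + A * Aᴴ).det :=
  (isUnit_iff_isUnit_det _).mp (posDef_one_add_mul_conjTranspose A).isUnit

lemma conjTranspose_mul_inv_one_add_mul_conjTranspose_mul [Fintype m] [Fintype n]
    [DecidableEq m] [DecidableEq n] (A : Matrix m n ℂ) :
    Aᴴ * (1 + A * Aᴴ)⁻¹ * A = 1 - (1 + Aᴴ * A)⁻¹ := by
  have hK := isUnit_det_one_add_mul_conjTranspose A
  have hL := isUnit_det_one_add_mul_conjTranspose Aᴴ
  rw [conjTranspose_conjTranspose] at hL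
  have hcomm : (1 + Aᴴ * A) * Aᴴ = Aᴴ * (1 + A * Aᴴ) := by
    rw [Matrix.add_mul, Matrix.mul_add, Matrix.one_mul, Matrix.mul_one, Matrix.mul_assoc]
  have hswap : Aᴴ * (1 + A * Aᴴ)⁻¹ = (1 + Aᴴ * A)⁻¹ * Aᴴ :=
    calc Aᴴ * (1 + A * Aᴴ)⁻¹ = (1 + Aᴴ * A)⁻¹ * ((1 + Aᴴ * A) * Aᴴ * (1 + A * Aᴴ)⁻¹) := by
          rw [Matrix.mul_assoc, nonsing_inv_mul_cancel_left _ _ hL]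
      _ = (1 + Aᴴ * A)⁻¹ * Aᴴ := by rw [hcomm, mul_nonsing_inv_cancel_right _ _ hK]
  rw [hswap, Matrix.mul_assoc, eq_sub_iff_add_eq]
  nth_rw 2 [← Matrix.mul_one (1 + Aᴴ * A)⁻¹]
  rw [← Matrix.mul_add, add_comm (Aᴴ * A), nonsing_inv_mul _ hL]

/-- The paper's `γ₁, γ₂, γ₃` are the values of this form at `(f, f)`, `(A g, A g)` and
`(A g, f)`. -/
noncomputable def resolventForm [Fintype m] [Fintype n] [DecidableEq m]
    (A : Matrix m n ℂ) (x y : m → ℂ) : ℂ :=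
  star x ⬝ᵥ ((1 + A * Aᴴ)⁻¹ *ᵥ y)

variable [Fintype m] [Fintype n] [DecidableEq m]

lemma star_resolventForm (A : Matrix m n ℂ) (x y : m → ℂ) :
    star (resolventForm A x y) = resolventForm A y x := by
  rw [resolventForm, resolventForm, star_dotProduct, star_star, star_mulVec,
    (posDef_one_add_mul_conjTranspose A).inv.isHermitian.eq, dotProduct_mulVec]

lemma resolventForm_self_nonneg (A : Matrix m n ℂ) (x : m → ℂ) : 0 ≤ resolventForm A x x :=
  (posDef_one_add_mul_conjTranspose A).inv.posSemidef.dotProduct_mulVec_nonneg x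

lemma star_dotProduct_self_sub_resolventForm_mulVec [DecidableEq n] (A : Matrix m n ℂ)
    (v : n → ℂ) :
    star v ⬝ᵥ v - resolventForm A (A *ᵥ v) (A *ᵥ v) = star v ⬝ᵥ ((1 + Aᴴ * A)⁻¹ *ᵥ v) := by
  rw [resolventForm, ← star_dotProduct_conjTranspose_mul_mulVec, mulVec_mulVec,
    conjTranspose_mul_inv_one_add_mul_conjTranspose_mul, sub_mulVec, dotProduct_sub,
    one_mulVec, sub_sub_cancel]

lemma resolventForm_mulVec_le_star_dotProduct_self [DecidableEq n] (A : Matrix m n ℂ)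
    (v : n → ℂ) : resolventForm A (A *ᵥ v) (A *ᵥ v) ≤ star v ⬝ᵥ v := by
  rw [← sub_nonneg, star_dotProduct_self_sub_resolventForm_mulVec]
  simpa using (posDef_one_add_mul_conjTranspose Aᴴ).inv.posSemidef.dotProduct_mulVec_nonneg v

end Resolvent

section RankOneUpdate

variable {m n : Type*}

lemma mul_conjTranspose_add_smul_vecMulVec [Fintype n] (A : Matrix m n ℂ) (a : ℂ) (u : m → ℂ)
    (v : n → ℂ) :
    (A + a • vecMulVec u (star v)) * (A + a • vecMulVec u (star v))ᴴ =
      A * Aᴴ + (a • vecMulVec u (star (A *ᵥ v)) + star a • vecMulVec (A *ᵥ v) (star u)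
        + (a * star a * (star v ⬝ᵥ v)) • vecMulVec u (star u)) := by
  rw [conjTranspose_add, conjTranspose_smul, conjTranspose_vecMulVec, star_star, Matrix.add_mul,
    Matrix.mul_add, Matrix.mul_add, Matrix.mul_smul, Matrix.smul_mul, Matrix.smul_mul,
    Matrix.mul_smul, mul_vecMulVec, vecMulVec_mul, vecMulVec_mul_vecMulVec, ← star_mulVec,
    vecMulVec_smul, smul_smul, smul_smul]
  abel

theorem det_one_add_mul_conjTranspose_add_smul_vecMulVec [Fintype m] [Fintype n] [DecidableEq m]
    (A : Matrix m n ℂ) (a : ℂ) (u : m → ℂ) (v : n → ℂ) :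
    (1 + (A + a • vecMulVec u (star v)) * (A + a • vecMulVec u (star v))ᴴ).det =
      (1 + A * Aᴴ).det *
        ((1 + a * resolventForm A (A *ᵥ v) u) * star (1 + a * resolventForm A (A *ᵥ v) u)
          + a * star a * resolventForm A u u *
            (star v ⬝ᵥ v - resolventForm A (A *ᵥ v) (A *ᵥ v))) := by
  set p := A *ᵥ v
  set c := star v ⬝ᵥ v
  set W : Matrix m (Fin 2) ℂ := Matrix.of fun k j => ![u k, p k] j
  set C : Matrix (Fin 2) (Fin 2) ℂ := !![a * star a * c, a; star a, 0]
  have hWCW : W * C * Wᴴ = a • vecMulVec u (star p) + star a • vecMulVec p (star u)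
      + (a * star a * c) • vecMulVec u (star u) := by
    ext i j
    simp only [W, C, mul_apply, of_apply, conjTranspose_apply, Fin.sum_univ_two, cons_val_zero,
      cons_val_one, cons_val_fin_one, Matrix.add_apply, Matrix.smul_apply, vecMulVec_apply,
      Pi.star_apply, smul_eq_mul]
    ring
  have hgram : Wᴴ * ((1 + A * Aᴴ)⁻¹ * W) = !![resolventForm A u u, resolventForm A u p;
      resolventForm A p u, resolventForm A p p] := by
    ext i j; fin_cases i <;> fin_cases j <;> rfl
  rw [mul_conjTranspose_add_smul_vecMulVec, ← add_assoc, ← hWCW,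
    det_add_mul _ _ (isUnit_det_one_add_mul_conjTranspose A), ← Matrix.mul_assoc,
    Matrix.mul_assoc Wᴴ, hgram, ← star_resolventForm A p u, mul_fin_two, one_fin_two,
    det_fin_two]
  simp only [Matrix.add_apply, of_apply, cons_val', cons_val_zero, cons_val_one, cons_val_fin_one,
    empty_val', star_add, star_mul', star_one]
  ring

end RankOneUpdate

section Channel

variable {m n : Type*} [Fintype n] {S : Matrix n n ℂ}

lemma inv_sq_smul_mul_mul_mul_conjTranspose (hS : Sᴴ = S) (r : ℝ) (H : Matrix m n ℂ) :
    ((r : ℂ) ^ 2)⁻¹ • (H * (S * S) * Hᴴ) = ((r : ℂ)⁻¹ • (H * S)) * ((r : ℂ)⁻¹ • (H * S))ᴴ := by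
  rw [conjTranspose_smul, conjTranspose_mul, hS, Matrix.smul_mul, Matrix.mul_smul, smul_smul,
    Matrix.mul_assoc H S, Matrix.mul_assoc, star_inv₀, Complex.star_def,
    Complex.conj_ofReal, sq, mul_inv, Matrix.mul_assoc S]

lemma inv_smul_add_smul_vecMulVec_mul (hS : Sᴴ = S) (r : ℝ) (H : Matrix m n ℂ) (a : ℂ)
    (x : m → ℂ) (y : n → ℂ) :
    (r : ℂ)⁻¹ • ((H + a • vecMulVec x (star y)) * S) =
      (r : ℂ)⁻¹ • (H * S) + a • vecMulVec x (star ((r : ℂ)⁻¹ • (S *ᵥ y))) := by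
  rw [Matrix.add_mul, smul_add, Matrix.smul_mul, vecMulVec_mul, star_smul, star_mulVec, hS,
    star_inv₀, Complex.star_def, Complex.conj_ofReal, vecMulVec_smul, smul_comm]

end Channel

lemma sq_norm_one_add_mul_add_le {a γ : ℂ} {s x : ℝ} (ha : ‖a‖ ≤ s) (hx : 0 ≤ x) :
    ‖1 + a * γ‖ ^ 2 + ‖a‖ ^ 2 * x ≤ 1 + (‖γ‖ ^ 2 + x) * s ^ 2 + 2 * s * ‖γ‖ := by
  have hs : 0 ≤ s := (norm_nonneg a).trans ha
  have h1 : ‖1 + a * γ‖ ≤ 1 + s * ‖γ‖ := calc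
    ‖1 + a * γ‖ ≤ 1 + ‖a‖ * ‖γ‖ := by simpa [norm_mul] using norm_add_le (1 : ℂ) (a * γ)
    _ ≤ 1 + s * ‖γ‖ := by gcongr
  have h2 : ‖a‖ ^ 2 ≤ s ^ 2 := by gcongr
  nlinarith [pow_le_pow_left₀ (norm_nonneg _) h1 2, mul_le_mul_of_nonneg_right h2 hx]

lemma mul_star_add_mul_star_mul_le {a γ₁ γ₃ d : ℂ} {s : ℝ} (ha : ‖a‖ ≤ s) (hγ₁ : 0 ≤ γ₁)
    (hd : 0 ≤ d) :
    (1 + a * γ₃) * star (1 + a * γ₃) + a * star a * γ₁ * d ≤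
      1 + ((‖γ₃‖ ^ 2 + γ₁.re * d.re : ℝ) : ℂ) * (s : ℂ) ^ 2 + 2 * (s : ℂ) * (‖γ₃‖ : ℂ) := by
  obtain ⟨x, rfl⟩ : ∃ x : ℝ, γ₁ = x := ⟨_, Complex.eq_re_of_ofReal_le (r := 0) (by simpa)⟩
  obtain ⟨y, rfl⟩ : ∃ y : ℝ, d = y := ⟨_, Complex.eq_re_of_ofReal_le (r := 0) (by simpa)⟩
  rw [Complex.ofReal_re, Complex.ofReal_re, Complex.star_def, Complex.mul_conj',
    Complex.mul_conj']
  norm_cast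
  rw [mul_assoc]
  exact sq_norm_one_add_mul_add_le ha
    (mul_nonneg (Complex.zero_le_real.mp hγ₁) (Complex.zero_le_real.mp hd))

theorem BD_RIS_rate_upper_bound_general
    {NR NT M : ℕ}
    (Hd : Matrix (Fin NR) (Fin NT) ℂ)
    (fa : Fin NR → ℂ) (fd : Fin M → ℂ) (ga : Fin M → ℂ) (gd : Fin NT → ℂ)
    (R : Matrix (Fin NT) (Fin NT) ℂ)
    (S : Matrix (Fin NT) (Fin NT) ℂ) (hS : S.PosSemidef) (hSS : S * S = R)
    (σ : ℝ)
    (A : Matrix (Fin NR) (Fin NT) ℂ) (hA : A = ((σ : ℂ))⁻¹ • (Hd * S))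
    (f : Fin NR → ℂ) (hf : f = fa)
    (g : Fin NT → ℂ) (hg : g = ((σ : ℂ))⁻¹ • (S *ᵥ gd))
    (γ₁ γ₂ γ₃ : ℂ)
    (hγ₁ : γ₁ = star f ⬝ᵥ ((1 + A * Aᴴ)⁻¹ *ᵥ f))
    (hγ₂ : γ₂ = star g ⬝ᵥ ((Aᴴ * (1 + A * Aᴴ)⁻¹ * A) *ᵥ g))
    (hγ₃ : γ₃ = star g ⬝ᵥ ((Aᴴ * (1 + A * Aᴴ)⁻¹) *ᵥ f))
    (Z : ℝ)
    (hZ : Z = (‖γ₃‖) ^ 2 + γ₁.re * ((euclNorm g) ^ 2 - γ₂.re))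
    (αs : ℝ) (hαs : αs = euclNorm fd * euclNorm ga) :
    ∀ Θ : Matrix (Fin M) (Fin M) ℂ, Θᵀ = Θ → Θᴴ * Θ = 1 →
      ∀ H : Matrix (Fin NR) (Fin NT) ℂ,
        H = Hd + (star fd ⬝ᵥ (Θ *ᵥ ga)) • vecMulVec fa (star gd) →
        (1 + (((σ : ℂ)) ^ 2)⁻¹ • (H * R * Hᴴ)).det
          ≤ (1 + A * Aᴴ).det
            * (1 + ((Z : ℝ) : ℂ) * ((αs : ℝ) : ℂ) ^ 2
                + 2 * ((αs : ℝ) : ℂ) * ((‖γ₃‖ : ℝ) : ℂ)) := by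
  intro Θ _ hΘ H hH
  have hγ₁' : γ₁ = resolventForm A f f := hγ₁
  have hγ₂' : γ₂ = resolventForm A (A *ᵥ g) (A *ᵥ g) := by
    rw [hγ₂, ← mulVec_mulVec, star_dotProduct_conjTranspose_mul_mulVec, resolventForm]
  have hγ₃' : γ₃ = resolventForm A (A *ᵥ g) f := by
    rw [hγ₃, star_dotProduct_conjTranspose_mul_mulVec, resolventForm]
  have hα : ‖star fd ⬝ᵥ (Θ *ᵥ ga)‖ ≤ αs := by
    rw [hαs, ← euclNorm_mulVec_of_conjTranspose_mul_self hΘ ga]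
    exact norm_star_dotProduct_le fd (Θ *ᵥ ga)
  have hZ' : Z = ‖γ₃‖ ^ 2 + γ₁.re * (star g ⬝ᵥ g - γ₂).re := by
    rw [hZ, Complex.sub_re, ← ofReal_euclNorm_sq, Complex.ofReal_re]
  rw [hH, ← hSS, inv_sq_smul_mul_mul_mul_conjTranspose hS.isHermitian.eq,
    inv_smul_add_smul_vecMulVec_mul hS.isHermitian.eq, ← hA, ← hg, ← hf,
    det_one_add_mul_conjTranspose_add_smul_vecMulVec, ← hγ₁', ← hγ₂', ← hγ₃', hZ']
  refine mul_le_mul_of_nonneg_left ?_ (posDef_one_add_mul_conjTranspose A).det_pos.le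
  exact mul_star_add_mul_star_mul_le hα (hγ₁' ▸ resolventForm_self_nonneg A f)
    (sub_nonneg.mpr (hγ₂' ▸ resolventForm_mulVec_le_star_dotProduct_self A g))

/-- Upper bound on the achievable rate of a BD-RIS-assisted MIMO link with
pure LoS channels through the BD-RIS: for every symmetric unitary `Θ`,
`det(I + σ⁻²HRHᴴ) ≤ det(I + AAᴴ)(1 + Z α*² + 2α*|γ₃|)` with
`H = H_d + (f_dᴴ Θ g_a) f_a g_dᴴ` and `α* = ‖f_d‖‖g_a‖`. -/
theorem BD_RIS_rate_upper_bound
    {NR NT M : ℕ}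
    (Hd : Matrix (Fin NR) (Fin NT) ℂ)
    (fa : Fin NR → ℂ) (fd : Fin M → ℂ) (ga : Fin M → ℂ) (gd : Fin NT → ℂ)
    (R : Matrix (Fin NT) (Fin NT) ℂ) (hR : R.PosSemidef)
    (S : Matrix (Fin NT) (Fin NT) ℂ) (hS : S.PosSemidef) (hSS : S * S = R)
    (σ : ℝ) (hσ : 0 < σ)
    (A : Matrix (Fin NR) (Fin NT) ℂ) (hA : A = ((σ : ℂ))⁻¹ • (Hd * S))
    (f : Fin NR → ℂ) (hf : f = fa)
    (g : Fin NT → ℂ) (hg : g = ((σ : ℂ))⁻¹ • (S *ᵥ gd))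
    (γ₁ γ₂ γ₃ : ℂ)
    (hγ₁ : γ₁ = star f ⬝ᵥ ((1 + A * Aᴴ)⁻¹ *ᵥ f))
    (hγ₂ : γ₂ = star g ⬝ᵥ ((Aᴴ * (1 + A * Aᴴ)⁻¹ * A) *ᵥ g))
    (hγ₃ : γ₃ = star g ⬝ᵥ ((Aᴴ * (1 + A * Aᴴ)⁻¹) *ᵥ f))
    (Z : ℝ)
    (hZ : Z = (‖γ₃‖) ^ 2 + γ₁.re * ((euclNorm g) ^ 2 - γ₂.re))
    (αs : ℝ) (hαs : αs = euclNorm fd * euclNorm ga) :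
    ∀ Θ : Matrix (Fin M) (Fin M) ℂ, Θᵀ = Θ → Θᴴ * Θ = 1 →
      ∀ H : Matrix (Fin NR) (Fin NT) ℂ,
        H = Hd + (star fd ⬝ᵥ (Θ *ᵥ ga)) • vecMulVec fa (star gd) →
        (1 + (((σ : ℂ)) ^ 2)⁻¹ • (H * R * Hᴴ)).det
          ≤ (1 + A * Aᴴ).det
            * (1 + ((Z : ℝ) : ℂ) * ((αs : ℝ) : ℂ) ^ 2
                + 2 * ((αs : ℝ) : ℂ) * ((‖γ₃‖ : ℝ) : ℂ)) :=
  BD_RIS_rate_upper_bound_general Hd fa fd ga gd R S hS hSS σ A hA f hf g hg γ₁ γ₂ γ₃ hγ₁ hγ₂ hγ₃ Z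
    hZ αs hαs
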